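/- Let θ ∈ (0,1) and λ ∈ (0,1]. The map Ψ satisfies Ψ(0) = 0 and is a global contraction: |Ψ(g) − Ψ(h)| ≤ ρ·|g − h| for all g, h ∈ ℝ, where ρ = 1 − λ·min(θ, 1−θ) ∈ (0,1). In particular |Ψ(g)| ≤ ρ·|g| for all g ∈ ℝ. -/

import Mathlib

/-!
Writing `σ(t) = λeᵗ / (1 - λ + λeᵗ)` for the derivative of `t ↦ log (1 - λ + λeᵗ)`, one gets
`Ψ'(g) = 1 - θ σ(θg) - (1 - θ) σ(-(1 - θ)g)`. Since `σ` takes values in `[0, 1]`, `Ψ' ≥ 0`;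
since `σ(t) ≥ λ` for `t ≥ 0` and one of `θg`, `-(1 - θ)g` is nonnegative,
`Ψ' ≤ 1 - λ min(θ, 1 - θ)`. The mean value theorem then gives the contraction estimate.
-/

open Real

/-- One-block pre-arbitrage gap update map of the partially active AMM built on
a G3M with weights `(θ, 1-θ)`. -/
noncomputable def Psi (θ lam g : ℝ) : ℝ :=
  g - Real.log (1 - lam + lam * Real.exp (θ * g))
    + Real.log (1 - lam + lam * Real.exp (-(1 - θ) * g))

open Set

section ExpShare

variable {lam : ℝ}

lemma one_sub_add_mul_exp_pos (hlam : lam ∈ Icc (0 : ℝ) 1) (t : ℝ) :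
    0 < 1 - lam + lam * exp t := by
  nlinarith [hlam.1, hlam.2, exp_pos t, mul_nonneg hlam.1 (exp_pos t).le]

noncomputable def expShare (lam t : ℝ) : ℝ :=
  lam * exp t / (1 - lam + lam * exp t)

lemma expShare_nonneg (hlam : lam ∈ Icc (0 : ℝ) 1) (t : ℝ) : 0 ≤ expShare lam t :=
  div_nonneg (mul_nonneg hlam.1 (exp_pos t).le) (one_sub_add_mul_exp_pos hlam t).le

lemma expShare_le_one (hlam : lam ∈ Icc (0 : ℝ) 1) (t : ℝ) : expShare lam t ≤ 1 := by
  rw [expShare, div_le_one (one_sub_add_mul_exp_pos hlam t)]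
  linarith [hlam.2]

lemma le_expShare (hlam : lam ∈ Icc (0 : ℝ) 1) {t : ℝ} (ht : 0 ≤ t) : lam ≤ expShare lam t := by
  rw [expShare, le_div_iff₀ (one_sub_add_mul_exp_pos hlam t)]
  nlinarith [mul_nonneg (mul_nonneg hlam.1 (sub_nonneg.2 hlam.2)) (sub_nonneg.2 (one_le_exp ht))]

lemma hasDerivAt_log_one_sub_add_mul_exp (hlam : lam ∈ Icc (0 : ℝ) 1) (c x : ℝ) :
    HasDerivAt (fun x => log (1 - lam + lam * exp (c * x))) (c * expShare lam (c * x)) x := by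
  have hinner : HasDerivAt (fun x => 1 - lam + lam * exp (c * x))
      (lam * (exp (c * x) * c)) x := by
    simpa using ((((hasDerivAt_id x).const_mul c).exp).const_mul lam).const_add (1 - lam)
  convert hinner.log (one_sub_add_mul_exp_pos hlam _).ne' using 1
  rw [expShare]
  ring

end ExpShare

section Psi

variable {θ lam : ℝ}

lemma Psi_zero : Psi θ lam 0 = 0 := by
  simp [Psi]

lemma hasDerivAt_Psi (hlam : lam ∈ Icc (0 : ℝ) 1) (g : ℝ) :
    HasDerivAt (Psi θ lam)
      (1 - θ * expShare lam (θ * g) - (1 - θ) * expShare lam (-(1 - θ) * g)) g := by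
  have := ((hasDerivAt_id g).sub (hasDerivAt_log_one_sub_add_mul_exp hlam θ g)).add
    (hasDerivAt_log_one_sub_add_mul_exp hlam (-(1 - θ)) g)
  exact this.congr_deriv (by ring)

lemma abs_deriv_Psi_le (hθ : θ ∈ Icc (0 : ℝ) 1) (hlam : lam ∈ Icc (0 : ℝ) 1) (g : ℝ) :
    |1 - θ * expShare lam (θ * g) - (1 - θ) * expShare lam (-(1 - θ) * g)|
      ≤ 1 - lam * min θ (1 - θ) := by
  obtain ⟨hθ0, hθ1⟩ := hθ
  have hs₀ := expShare_nonneg hlam (θ * g)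
  have hs₁ := expShare_le_one hlam (θ * g)
  have hr₀ := expShare_nonneg hlam (-(1 - θ) * g)
  have hr₁ := expShare_le_one hlam (-(1 - θ) * g)
  have hmin_θ : lam * min θ (1 - θ) ≤ lam * θ :=
    mul_le_mul_of_nonneg_left (min_le_left _ _) hlam.1
  have hmin_θ' : lam * min θ (1 - θ) ≤ lam * (1 - θ) :=
    mul_le_mul_of_nonneg_left (min_le_right _ _) hlam.1
  rw [abs_of_nonneg (by nlinarith)]
  rcases le_total 0 g with hg | hg
  · have := le_expShare hlam (mul_nonneg hθ0 hg)
    nlinarith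
  · have := le_expShare hlam (t := -(1 - θ) * g) (mul_nonneg_of_nonpos_of_nonpos (by linarith) hg)
    nlinarith

lemma abs_Psi_sub_le (hθ : θ ∈ Icc (0 : ℝ) 1) (hlam : lam ∈ Icc (0 : ℝ) 1) (g h : ℝ) :
    |Psi θ lam g - Psi θ lam h| ≤ (1 - lam * min θ (1 - θ)) * |g - h| := by
  simpa only [Real.norm_eq_abs] using
    Convex.norm_image_sub_le_of_norm_hasDerivWithin_le
      (fun x _ => (hasDerivAt_Psi hlam x).hasDerivWithinAt)
      (fun x _ => (Real.norm_eq_abs _).trans_le (abs_deriv_Psi_le hθ hlam x))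
      convex_univ (mem_univ h) (mem_univ g)

end Psi

theorem stmt2 (θ lam : ℝ) (hθ : θ ∈ Set.Ioo (0:ℝ) 1) (hlam : lam ∈ Set.Ioc (0:ℝ) 1) :
    Psi θ lam 0 = 0 ∧
    (∀ g h : ℝ, |Psi θ lam g - Psi θ lam h| ≤ (1 - lam * min θ (1 - θ)) * |g - h|) ∧
    1 - lam * min θ (1 - θ) ∈ Set.Ioo (0:ℝ) 1 ∧
    (∀ g : ℝ, |Psi θ lam g| ≤ (1 - lam * min θ (1 - θ)) * |g|) := by
  have hlip := abs_Psi_sub_le (Ioo_subset_Icc_self hθ) (Ioc_subset_Icc_self hlam)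
  have hmin_pos : 0 < min θ (1 - θ) := lt_min hθ.1 (by linarith [hθ.2])
  have hmin_lt_one : min θ (1 - θ) < 1 := (min_le_left _ _).trans_lt hθ.2
  refine ⟨Psi_zero, hlip, ⟨?_, ?_⟩, fun g => by simpa [Psi_zero] using hlip g 0⟩
  · nlinarith [hlam.2]
  · nlinarith [hlam.1]
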